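/- arXiv:0709.3915 — 2 statements merged into one kernel-verified Lean document; each statement's English description precedes it below -/
import Mathlib

section
/- Under the hypotheses above (expander code with δ > 1/2), for any fractional pseudocodeword x of the fundamental polytope, the number of inequalities active at x is at most (m − |C_frac(x)|)·d_c + 2·|C_frac(x)| + n − |V_frac(x)|. -/
/-!
For `y ∈ [0,1]^ι` the forbidden-set inequality of an odd pattern `z` reads `∑ᵢ |yᵢ - zᵢ| ≥ 1`.
Two distinct odd patterns differ in an even, nonzero number of places, so if both inequalities
are tight at `y`, the total slack `2` is used up on those places and `y` is integral wherever the
patterns agree. At a check with a fractional neighbour, two of any three tight patterns would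
agree at that neighbour; hence at most two are tight. At a check with integral neighbourhood, `y`
is a vertex and the tight odd patterns are its `d_c` one-bit flips. A box inequality is tight
only at an integral coordinate, and only one per coordinate.
-/

open Finset

/-- The number of inequalities of the fundamental polytope active at a point
`x ∈ ℝ^n`: for each check `a` and each odd-weight local pattern
`z ∈ {0,1}^{N(a)}`, the forbidden-set inequality
`∑_{i : z_i = 0} x_i + ∑_{i : z_i = 1} (1 - x_i) ≥ 1` is active iff it holds with
equality; the box inequality `(i, true)` (resp. `(i, false)`) is active iff `x i = 1`
(resp. `x i = 0`). -/
noncomputable def activeCount (n m : ℕ) (Na : Fin m → Finset (Fin n))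
    (x : Fin n → ℝ) : ℕ :=
  (∑ a : Fin m, {z : ↥(Na a) → ZMod 2 | (∑ i, z i) = 1 ∧
      (∑ i, (if z i = 1 then 1 - x i.1 else x i.1)) = (1 : ℝ)}.ncard)
  + {p : Fin n × Bool | if p.2 then x p.1 = 1 else x p.1 = 0}.ncard

namespace ParityPolytope

variable {ι : Type*}

/-- `slack z y i = |y i - z i|` when `0 ≤ y i ≤ 1`. -/
def slack (z : ι → ZMod 2) (y : ι → ℝ) (i : ι) : ℝ :=
  if z i = 1 then 1 - y i else y i

lemma slack_nonneg {z : ι → ZMod 2} {y : ι → ℝ} {i : ι} (h0 : 0 ≤ y i) (h1 : y i ≤ 1) :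
    0 ≤ slack z y i := by
  unfold slack; split <;> linarith

lemma slack_add_slack_of_ne {z z' : ι → ZMod 2} (y : ι → ℝ) {i : ι} (h : z i ≠ z' i) :
    slack z y i + slack z' y i = 1 := by
  have : z i = 1 ∧ z' i = 0 ∨ z i = 0 ∧ z' i = 1 := by
    revert h; generalize z i = a; generalize z' i = b; decide +revert
  unfold slack; rcases this with ⟨ha, hb⟩ | ⟨ha, hb⟩ <;> simp [ha, hb]

lemma eq_zero_or_eq_one_of_slack_eq_zero {z : ι → ZMod 2} {y : ι → ℝ} {i : ι}
    (h : slack z y i = 0) : y i = 0 ∨ y i = 1 := by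
  unfold slack at h; split at h
  · right; linarith
  · left; exact h

variable [Fintype ι]

def activeForbiddenSet (y : ι → ℝ) : Set (ι → ZMod 2) :=
  {z | ∑ i, z i = 1 ∧ ∑ i, slack z y i = 1}

lemma even_card_filter_ne {z z' : ι → ZMod 2} (hz : ∑ i, z i = 1) (hz' : ∑ i, z' i = 1) :
    Even #{i | z i ≠ z' i} := by
  have hsum : ∀ i, z i + z' i = if z i ≠ z' i then 1 else 0 := by
    intro i; generalize z i = a; generalize z' i = b; revert a b; decide
  rw [← ZMod.natCast_eq_zero_iff_even, ← sum_boole, ← sum_congr rfl fun i _ => hsum i,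
    sum_add_distrib, hz, hz']
  decide

lemma slack_eq_zero_of_agree {y : ι → ℝ} (hy : ∀ i, 0 ≤ y i ∧ y i ≤ 1) {z z' : ι → ZMod 2}
    (hz : z ∈ activeForbiddenSet y) (hz' : z' ∈ activeForbiddenSet y) (hne : z ≠ z')
    {j : ι} (hj : z j = z' j) : slack z y j = 0 := by
  set D : Finset ι := {i | z i ≠ z' i}
  have hD : 2 ≤ #D := by
    obtain ⟨i, hi⟩ := Function.ne_iff.mp hne
    obtain ⟨k, hk⟩ : Even #D := even_card_filter_ne hz.1 hz'.1
    have : 0 < #D := card_pos.mpr ⟨i, mem_filter.mpr ⟨mem_univ _, hi⟩⟩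
    omega
  have htotal : ∑ i, (slack z y i + slack z' y i) = 2 := by
    rw [sum_add_distrib, hz.2, hz'.2]; norm_num
  rw [← sum_filter_not_add_sum_filter _ (fun i => z i ≠ z' i),
    sum_congr rfl fun i hi => slack_add_slack_of_ne y (mem_filter.mp hi).2, sum_const,
    nsmul_one] at htotal
  have hagree : ∀ i ∈ ({i | ¬ z i ≠ z' i} : Finset ι),
      slack z y i + slack z' y i = 2 * slack z y i := by
    intro i hi
    simp only [slack, not_not.mp (mem_filter.mp hi).2]; ring
  rw [sum_congr rfl hagree, ← mul_sum] at htotal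
  have hDR : (2 : ℝ) ≤ #D := by exact_mod_cast hD
  have hnn : ∀ i ∈ ({i | ¬ z i ≠ z' i} : Finset ι), 0 ≤ slack z y i :=
    fun i _ => slack_nonneg (hy i).1 (hy i).2
  have hzero : ∑ i ∈ ({i | ¬ z i ≠ z' i} : Finset ι), slack z y i = 0 :=
    le_antisymm (by linarith) (sum_nonneg hnn)
  exact (sum_eq_zero_iff_of_nonneg hnn).mp hzero j (mem_filter.mpr ⟨mem_univ _, not_not.mpr hj⟩)

lemma ncard_activeForbiddenSet_le_two {y : ι → ℝ} (hy : ∀ i, 0 ≤ y i ∧ y i ≤ 1) {p : ι}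
    (hp : 0 < y p ∧ y p < 1) : (activeForbiddenSet y).ncard ≤ 2 := by
  by_contra! h
  obtain ⟨z₁, h₁, z₂, h₂, z₃, h₃, h₁₂, h₁₃, h₂₃⟩ := (Set.two_lt_ncard (Set.toFinite _)).mp h
  have hp' : ¬ (y p = 0 ∨ y p = 1) := by rintro (h | h) <;> linarith
  have differ {z z'} (hz : z ∈ activeForbiddenSet y) (hz' : z' ∈ activeForbiddenSet y)
      (hne : z ≠ z') : z p ≠ z' p := fun h =>
    hp' (eq_zero_or_eq_one_of_slack_eq_zero (slack_eq_zero_of_agree hy hz hz' hne h))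
  have pigeonhole : ∀ a b c : ZMod 2, a ≠ b → a ≠ c → b = c := by decide
  exact differ h₂ h₃ h₂₃ (pigeonhole _ _ _ (differ h₁ h₂ h₁₂) (differ h₁ h₃ h₁₃))

lemma ncard_activeForbiddenSet_le_card {y : ι → ℝ} (hy : ∀ i, y i = 0 ∨ y i = 1) :
    (activeForbiddenSet y).ncard ≤ Fintype.card ι := by
  classical
  let b : ι → ZMod 2 := fun i => if y i = 1 then 1 else 0
  have hslack : ∀ z i, slack z y i = if z i ≠ b i then 1 else 0 := by
    intro z i
    have : z i = 0 ∨ z i = 1 := by generalize z i = a; revert a; decide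
    rcases hy i with h | h <;> rcases this with h' | h' <;> simp [slack, b, h, h']
  have hsub : activeForbiddenSet y ⊆ Set.range fun i => Function.update b i (b i + 1) := by
    rintro z ⟨-, hz⟩
    simp only [hslack, sum_boole] at hz
    obtain ⟨i, hi⟩ := card_eq_one.mp (by exact_mod_cast hz)
    have hdiff : ∀ j, z j ≠ b j ↔ j = i := fun j => by simpa using congrArg (j ∈ ·) hi
    refine ⟨i, funext fun j => ?_⟩
    by_cases hj : j = i
    · subst hj
      have flip : ∀ c d : ZMod 2, c ≠ d → d + 1 = c := by decide
      simpa using flip _ _ ((hdiff j).mpr rfl)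
    · simpa [hj] using (not_not.mp (mt (hdiff j).mp hj)).symm
  calc (activeForbiddenSet y).ncard
      ≤ (Set.range fun i => Function.update b i (b i + 1)).ncard := Set.ncard_le_ncard hsub
    _ = Nat.card (Set.range fun i => Function.update b i (b i + 1)) :=
      (Nat.card_coe_set_eq _).symm
    _ ≤ Nat.card ι := Finite.card_range_le _
    _ = Fintype.card ι := Nat.card_eq_fintype_card

lemma ncard_activeForbiddenSet_le {y : ι → ℝ} (hy : ∀ i, 0 ≤ y i ∧ y i ≤ 1) :
    (activeForbiddenSet y).ncard ≤
      if ∃ i, 0 < y i ∧ y i < 1 then 2 else Fintype.card ι := by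
  split_ifs with hfrac
  · obtain ⟨p, hp⟩ := hfrac
    exact ncard_activeForbiddenSet_le_two hy hp
  · push Not at hfrac
    refine ncard_activeForbiddenSet_le_card fun i => ?_
    rcases (hy i).1.eq_or_lt with h | h
    · exact .inl h.symm
    · exact .inr (le_antisymm (hy i).2 (hfrac i h))

end ParityPolytope

lemma ncard_activeBox_add_ncard_fractional_le {ι : Type*} [Fintype ι] (y : ι → ℝ) :
    {p : ι × Bool | if p.2 then y p.1 = 1 else y p.1 = 0}.ncard
      + {i | 0 < y i ∧ y i < 1}.ncard ≤ Fintype.card ι := by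
  have hmaps : ∀ p ∈ {p : ι × Bool | if p.2 then y p.1 = 1 else y p.1 = 0},
      p.1 ∈ {i | 0 < y i ∧ y i < 1}ᶜ := by
    rintro ⟨i, _ | _⟩ h <;> simp_all
  have hinj : Set.InjOn Prod.fst {p : ι × Bool | if p.2 then y p.1 = 1 else y p.1 = 0} := by
    rintro ⟨i, _ | _⟩ h ⟨j, _ | _⟩ h' (rfl : i = j) <;> simp_all
  have hle := Set.ncard_le_ncard_of_injOn Prod.fst hmaps hinj (Set.toFinite _)
  have hcompl := Set.ncard_add_ncard_compl {i | 0 < y i ∧ y i < 1}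
  rw [Nat.card_eq_fintype_card] at hcompl
  omega

lemma sum_le_ncard_mul_add_ncard_compl_mul {α : Type*} [Fintype α] (s : Set α) {f : α → ℕ}
    {b c : ℕ} (hs : ∀ a ∈ s, f a ≤ b) (hsc : ∀ a ∉ s, f a ≤ c) :
    ∑ a, f a ≤ s.ncard * b + sᶜ.ncard * c := by
  classical
  rw [← sum_filter_add_sum_filter_not univ (· ∈ s)]
  have hcard : ∀ t : Set α, t.ncard = #{a | a ∈ t} := fun t => by
    rw [← Set.ncard_coe_finset]; simp
  rw [hcard s, hcard sᶜ]
  gcongr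
  · exact sum_le_card_nsmul _ _ _ fun a ha => hs a (mem_filter.mp ha).2
  · simpa only [Set.mem_compl_iff, smul_eq_mul] using
      sum_le_card_nsmul _ _ _ fun a ha => hsc a (mem_filter.mp ha).2

lemma activeCount_eq (n m : ℕ) (Na : Fin m → Finset (Fin n)) (x : Fin n → ℝ) :
    activeCount n m Na x =
      ∑ a, (ParityPolytope.activeForbiddenSet fun i : Na a => x i).ncard
        + {p : Fin n × Bool | if p.2 then x p.1 = 1 else x p.1 = 0}.ncard :=
  rfl

theorem fractional_pseudocodeword_active_set_bound_general
    (n m dc : ℕ)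
    (Na : Fin m → Finset (Fin n))
    (hdc : ∀ a, (Na a).card = dc)
    (P : Set (Fin n → ℝ))
    (hP : P = {f | (∀ i, 0 ≤ f i ∧ f i ≤ 1) ∧ ∀ a : Fin m,
        (fun i : ↥(Na a) => f i.1) ∈ convexHull ℝ
          {z : ↥(Na a) → ℝ | (∀ i, z i = 0 ∨ z i = 1) ∧ Even {i | z i = 1}.ncard}})
    (x : Fin n → ℝ) (hx : x ∈ Set.extremePoints ℝ P) :
    (activeCount n m Na x : ℤ) ≤
      ((m : ℤ) - ({a : Fin m | ∃ i ∈ Na a, 0 < x i ∧ x i < 1}.ncard : ℤ)) * dc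
        + 2 * ({a : Fin m | ∃ i ∈ Na a, 0 < x i ∧ x i < 1}.ncard : ℤ)
        + (n : ℤ) - ({i : Fin n | 0 < x i ∧ x i < 1}.ncard : ℤ) := by
  have hbox : ∀ i, 0 ≤ x i ∧ x i ≤ 1 := (hP ▸ hx.1).1
  set Cfrac := {a : Fin m | ∃ i ∈ Na a, 0 < x i ∧ x i < 1}
  have hcheck (a : Fin m) := ParityPolytope.ncard_activeForbiddenSet_le fun i : Na a => hbox i
  have hmem (a : Fin m) : (∃ i : Na a, 0 < x i ∧ x i < 1) ↔ a ∈ Cfrac := by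
    simp only [Subtype.exists, exists_prop]; rfl
  simp only [hmem, Fintype.card_coe, hdc] at hcheck
  have hforb := sum_le_ncard_mul_add_ncard_compl_mul Cfrac
    (fun a ha => by simpa [ha] using hcheck a) (fun a ha => by simpa [ha] using hcheck a)
  have hCfrac : (Cfracᶜ.ncard : ℤ) = m - Cfrac.ncard := by
    have := Set.ncard_add_ncard_compl Cfrac
    rw [Nat.card_eq_fintype_card, Fintype.card_fin] at this
    omega
  have hvar := ncard_activeBox_add_ncard_fractional_le x
  rw [Fintype.card_fin] at hvar
  zify at hforb hvar
  rw [hCfrac] at hforb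
  rw [activeCount_eq]
  push_cast
  linarith

/-- **Active-set bound for fractional pseudocodewords.** For an `(α, δ)`-expander code
with `δ > 1/2`, any fractional pseudocodeword `x` of the fundamental polytope has at
most `(m - |C_frac(x)|)·d_c + 2·|C_frac(x)| + n - |V_frac(x)|` active inequalities. -/
theorem fractional_pseudocodeword_active_set_bound
    (n m dv dc : ℕ) (hn : 0 < n)
    (Na : Fin m → Finset (Fin n))
    (hdc : ∀ a, (Na a).card = dc)
    (hdv : ∀ i : Fin n, (Finset.univ.filter fun a => i ∈ Na a).card = dv)
    (α δ : ℝ) (hα0 : 0 < α) (hα1 : α < 1) (hδ : 1 / 2 < δ) (hδ1 : δ ≤ 1)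
    (hexp : ∀ S : Finset (Fin n), (S.card : ℝ) ≤ α * n →
      δ * dv * S.card ≤ ((Finset.univ.filter fun a => ∃ i ∈ S, i ∈ Na a).card : ℝ))
    (P : Set (Fin n → ℝ))
    (hP : P = {f | (∀ i, 0 ≤ f i ∧ f i ≤ 1) ∧ ∀ a : Fin m,
        (fun i : ↥(Na a) => f i.1) ∈ convexHull ℝ
          {z : ↥(Na a) → ℝ | (∀ i, z i = 0 ∨ z i = 1) ∧ Even {i | z i = 1}.ncard}})
    (x : Fin n → ℝ) (hx : x ∈ Set.extremePoints ℝ P)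
    (hfrac : ∃ i, 0 < x i ∧ x i < 1) :
    (activeCount n m Na x : ℤ) ≤
      ((m : ℤ) - ({a : Fin m | ∃ i ∈ Na a, 0 < x i ∧ x i < 1}.ncard : ℤ)) * dc
        + 2 * ({a : Fin m | ∃ i ∈ Na a, 0 < x i ∧ x i < 1}.ncard : ℤ)
        + (n : ℤ) - ({i : Fin n | 0 < x i ∧ x i < 1}.ncard : ℤ) :=
  fractional_pseudocodeword_active_set_bound_general n m dc Na hdc P hP x hx
end

section
/- In an (α,δ)-expander code with δ > 1/2, for any fractional pseudocodeword, every connected component of the subgraph induced by the fractional bits (together with their adjacent checks) contains more than αn fractional bits. -/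
/-!
Let `S` be the component of a fractional bit. Every check `a` meeting `S` meets it twice: the
restriction of `x` to `a` lies in the parity polytope, and if `j` were its only fractional
coordinate, take the even-weight vertex `w` agreeing with `x` off `j`. At every even-weight
vertex `z` one has `|z_j - w_j| ≤ ∑_{k ≠ j} |z_k - w_k|` (two even vertices cannot differ in a
single bit), and this inequality is linear on the cube because `w` is binary, so it passes to the
convex hull; at `x` its right side vanishes while its left side does not. Double counting then
gives `2 |N(S)| ≤ d_v |S|`, which contradicts `δ d_v |S| ≤ |N(S)|` with `δ > 1/2` when
`|S| ≤ αn`. Here `d_v > 0` because a coordinate of a vertex lying in no check could be moved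
freely.
-/

open Finset Function

def evenWeightVertices (ι : Type*) : Set (ι → ℝ) :=
  {z | (∀ i, z i = 0 ∨ z i = 1) ∧ Even {i | z i = 1}.ncard}

/-- For binary `w` and `0 ≤ z ≤ 1` this is `|z k - w k|`, written so as to be affine in `z`. -/
noncomputable def bitDist {ι : Type*} (w z : ι → ℝ) (k : ι) : ℝ :=
  if w k = 0 then z k else 1 - z k

section ParityPolytope

variable {ι : Type*}

theorem bitDist_add_smul {w z₁ z₂ : ι → ℝ} {a b : ℝ} (hab : a + b = 1) (k : ι) :
    bitDist w (a • z₁ + b • z₂) k = a * bitDist w z₁ k + b * bitDist w z₂ k := by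
  simp only [bitDist, Pi.add_apply, Pi.smul_apply, smul_eq_mul]
  split_ifs
  · ring
  · linear_combination -hab

theorem bitDist_of_binary {w z : ι → ℝ} {k : ι} (hw : w k = 0 ∨ w k = 1)
    (hz : z k = 0 ∨ z k = 1) : bitDist w z k = if z k = w k then 0 else 1 := by
  rcases hw with hw | hw <;> rcases hz with hz | hz <;> simp [bitDist, hw, hz]

theorem convexHull_evenWeightVertices_subset_Icc :
    convexHull ℝ (evenWeightVertices ι) ⊆ Set.Icc 0 1 := by
  refine convexHull_min (fun z hz => ⟨fun i => ?_, fun i => ?_⟩) (convex_Icc 0 1) <;>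
    rcases hz.1 i with h | h <;> simp [h]

variable [DecidableEq ι]

theorem ncard_update_one_eq [Finite ι] (z : ι → ℝ) (j : ι) :
    {k | update z j 1 k = 1}.ncard = {k | update z j 0 k = 1}.ncard + 1 := by
  have : {k | update z j 1 k = 1} = insert j {k | update z j 0 k = 1} := by
    ext k
    by_cases hk : k = j <;> simp [hk]
  rw [this, Set.ncard_insert_of_notMem (by simp)]

theorem eq_of_forall_ne_eq_of_mem_evenWeightVertices [Finite ι] {z w : ι → ℝ}
    (hz : z ∈ evenWeightVertices ι) (hw : w ∈ evenWeightVertices ι) {j : ι}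
    (h : ∀ k ≠ j, z k = w k) : z j = w j := by
  wlog hzj : z j = 1 generalizing z w
  · rcases hz.1 j with hz0 | hz1
    · rcases hw.1 j with hw0 | hw1
      · rw [hz0, hw0]
      · exact (this hw hz (fun k hk => (h k hk).symm) hw1).symm
    · exact this hz hw h hz1
  by_contra hne
  have hwj : w j = 0 := (hw.1 j).resolve_right (hzj ▸ Ne.symm hne)
  have hz_eq : z = update w j 1 := by
    ext k
    by_cases hk : k = j
    · subst hk
      simp [hzj]
    · simp [update_of_ne hk, h k hk]
  have hw_eq : update w j 0 = w := by
    rw [← hwj]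
    exact update_eq_self j w
  have heven := hz.2
  rw [hz_eq, ncard_update_one_eq, hw_eq] at heven
  exact Nat.even_add_one.1 heven hw.2

variable [Fintype ι]

theorem bitDist_le_sum_erase {w z : ι → ℝ} (hw : w ∈ evenWeightVertices ι)
    (hz : z ∈ evenWeightVertices ι) (j : ι) :
    bitDist w z j ≤ ∑ k ∈ univ.erase j, bitDist w z k := by
  simp only [fun k => bitDist_of_binary (hw.1 k) (hz.1 k)]
  by_cases hall : ∀ k ≠ j, z k = w k
  · rw [if_pos (eq_of_forall_ne_eq_of_mem_evenWeightVertices hz hw hall)]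
    exact sum_nonneg fun k _ => by split_ifs <;> norm_num
  · push Not at hall
    obtain ⟨k, hkj, hk⟩ := hall
    calc (if z j = w j then 0 else 1 : ℝ) ≤ if z k = w k then 0 else 1 := by
          rw [if_neg hk]; split_ifs <;> norm_num
      _ ≤ _ := single_le_sum (f := fun k => if z k = w k then (0 : ℝ) else 1)
          (fun _ _ => by split_ifs <;> norm_num) (mem_erase.2 ⟨hkj, mem_univ k⟩)

theorem convex_setOf_bitDist_le_sum_erase (w : ι → ℝ) (j : ι) :
    Convex ℝ {z : ι → ℝ | bitDist w z j ≤ ∑ k ∈ univ.erase j, bitDist w z k} := by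
  intro z₁ h₁ z₂ h₂ a b ha hb hab
  simp only [Set.mem_ofPred_eq, bitDist_add_smul hab, sum_add_distrib, ← mul_sum] at h₁ h₂ ⊢
  exact add_le_add (mul_le_mul_of_nonneg_left h₁ ha) (mul_le_mul_of_nonneg_left h₂ hb)

theorem exists_ne_mem_Ioo_of_mem_convexHull_evenWeightVertices {y : ι → ℝ}
    (hy : y ∈ convexHull ℝ (evenWeightVertices ι)) {j : ι} (hj : 0 < y j ∧ y j < 1) :
    ∃ k ≠ j, 0 < y k ∧ y k < 1 := by
  by_contra! hint
  have hbin : ∀ k ≠ j, y k = 0 ∨ y k = 1 := by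
    intro k hk
    obtain ⟨h0, h1⟩ := convexHull_evenWeightVertices_subset_Icc hy
    rcases (h0 k).eq_or_lt with h | h
    · exact .inl h.symm
    · exact .inr ((h1 k).antisymm (hint k hk h))
  obtain ⟨w, hw, hwy⟩ : ∃ w ∈ evenWeightVertices ι, ∀ k ≠ j, w k = y k := by
    have hbin_update :
        ∀ c : ℝ, c = 0 ∨ c = 1 → ∀ k, update y j c k = 0 ∨ update y j c k = 1 := by
      intro c hc k
      by_cases hk : k = j
      · subst hk
        simpa using hc
      · rw [update_of_ne hk]
        exact hbin k hk
    have hagree : ∀ c, ∀ k ≠ j, update y j c k = y k := fun c k hk => update_of_ne hk _ _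
    by_cases heven : Even {k | update y j 0 k = 1}.ncard
    · exact ⟨_, ⟨hbin_update 0 (.inl rfl), heven⟩, hagree 0⟩
    · refine ⟨_, ⟨hbin_update 1 (.inr rfl), ?_⟩, hagree 1⟩
      rw [ncard_update_one_eq]
      exact Nat.even_add_one.2 heven
  have hle : bitDist w y j ≤ ∑ k ∈ univ.erase j, bitDist w y k :=
    convexHull_min (fun z hz => bitDist_le_sum_erase hw hz j)
    (convex_setOf_bitDist_le_sum_erase w j) hy
  have hsum : ∑ k ∈ univ.erase j, bitDist w y k = 0 := sum_eq_zero fun k hk => by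
    have hkj := ne_of_mem_erase hk
    rw [bitDist_of_binary (hw.1 k) (hbin k hkj), if_pos (hwy k hkj).symm]
  have hpos : 0 < bitDist w y j := by
    unfold bitDist
    split_ifs <;> linarith
  linarith

end ParityPolytope

theorem notMem_extremePoints_of_update_mem {ι : Type*} [DecidableEq ι] {P : Set (ι → ℝ)}
    {x : ι → ℝ} {i : ι} {u v : ℝ} (hu : u < x i) (hv : x i < v)
    (huP : update x i u ∈ P) (hvP : update x i v ∈ P) : x ∉ Set.extremePoints ℝ P := by
  intro hx
  have hseg : x ∈ openSegment ℝ (update x i u) (update x i v) := by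
    rw [← Pi.image_update_openSegment, openSegment_eq_Ioo (hu.trans hv)]
    exact ⟨x i, ⟨hu, hv⟩, update_eq_self i x⟩
  have := congrFun (hx.2 huP hvP hseg) i
  rw [update_self] at this
  linarith

section Code

variable {ι κ : Type*} {N : κ → Finset ι} {x : ι → ℝ}

def fundamentalPolytope (N : κ → Finset ι) : Set (ι → ℝ) :=
  {f | (∀ i, 0 ≤ f i ∧ f i ≤ 1) ∧
    ∀ a, (fun i : ↥(N a) => f i.1) ∈ convexHull ℝ (evenWeightVertices ↥(N a))}

def fractionalAdj (N : κ → Finset ι) (x : ι → ℝ) (i j : ι) : Prop :=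
  (0 < x i ∧ x i < 1) ∧ (0 < x j ∧ x j < 1) ∧ ∃ a, i ∈ N a ∧ j ∈ N a

def checkNeighbors [Fintype κ] [DecidableEq ι] (N : κ → Finset ι) (S : Finset ι) :
    Finset κ :=
  univ.filter fun a => ∃ i ∈ S, i ∈ N a

theorem exists_mem_of_mem_extremePoints_fundamentalPolytope [DecidableEq ι]
    (hx : x ∈ Set.extremePoints ℝ (fundamentalPolytope N)) {i : ι} (hi : 0 < x i ∧ x i < 1) :
    ∃ a, i ∈ N a := by
  by_contra! h
  have hupdate : ∀ t ∈ Set.Icc (0 : ℝ) 1, update x i t ∈ fundamentalPolytope N := by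
    intro t ht
    refine ⟨fun k => ?_, fun a => ?_⟩
    · by_cases hk : k = i
      · subst hk
        simpa using ht
      · rw [update_of_ne hk]
        exact hx.1.1 k
    · have hrestrict : (fun k : ↥(N a) => update x i t k.1) = fun k => x k.1 :=
        funext fun k => update_of_ne (fun hki => h a (by rw [← hki]; exact k.2)) _ _
      rw [hrestrict]
      exact hx.1.2 a
  exact notMem_extremePoints_of_update_mem hi.1 hi.2
    (hupdate 0 ⟨le_rfl, zero_le_one⟩) (hupdate 1 ⟨zero_le_one, le_rfl⟩) hx

theorem fractional_of_reflTransGen_fractionalAdj {i j : ι} (hi : 0 < x i ∧ x i < 1)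
    (h : Relation.ReflTransGen (fractionalAdj N x) i j) : 0 < x j ∧ x j < 1 := by
  induction h with
  | refl => exact hi
  | tail _ hjk _ => exact hjk.2.1

theorem exists_ne_fractional_of_mem_fundamentalPolytope [DecidableEq ι]
    (hx : x ∈ fundamentalPolytope N) {a : κ} {j : ι} (hja : j ∈ N a)
    (hj : 0 < x j ∧ x j < 1) :
    ∃ k ∈ N a, k ≠ j ∧ 0 < x k ∧ x k < 1 := by
  obtain ⟨k, hkj, hk⟩ :=
    exists_ne_mem_Ioo_of_mem_convexHull_evenWeightVertices (hx.2 a) (j := ⟨j, hja⟩) hj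
  exact ⟨k, k.2, fun h => hkj (Subtype.ext h), hk⟩

variable [Fintype κ] [DecidableEq ι]

theorem two_le_card_filter_of_mem_checkNeighbors (hx : x ∈ fundamentalPolytope N)
    {S : Finset ι} (hfrac : ∀ j ∈ S, 0 < x j ∧ x j < 1)
    (hclosed : ∀ j ∈ S, ∀ k, fractionalAdj N x j k → k ∈ S) {a : κ}
    (ha : a ∈ checkNeighbors N S) : 2 ≤ (S.filter (· ∈ N a)).card := by
  obtain ⟨j, hjS, hja⟩ := (mem_filter.1 ha).2
  obtain ⟨k, hka, hkj, hk⟩ :=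
    exists_ne_fractional_of_mem_fundamentalPolytope hx hja (hfrac j hjS)
  have hkS := hclosed j hjS k ⟨hfrac j hjS, hk, a, hja, hka⟩
  calc 2 = ({k, j} : Finset ι).card := (card_pair hkj).symm
    _ ≤ _ := card_le_card fun u hu => by
      rcases mem_insert.1 hu with rfl | hu
      · exact mem_filter.2 ⟨hkS, hka⟩
      · rw [mem_singleton.1 hu]
        exact mem_filter.2 ⟨hjS, hja⟩

theorem card_checkNeighbors_mul_two_le {S : Finset ι} {dv : ℕ}
    (hdeg : ∀ i, (univ.filter fun a => i ∈ N a).card ≤ dv)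
    (h2 : ∀ a ∈ checkNeighbors N S, 2 ≤ (S.filter (· ∈ N a)).card) :
    (checkNeighbors N S).card * 2 ≤ S.card * dv :=
  card_mul_le_card_mul (fun a j => j ∈ N a) h2
    fun j _ => (card_le_card (filter_subset_filter _ (subset_univ _))).trans (hdeg j)

theorem lt_card_of_forall_mem_checkNeighbors_two_le {S : Finset ι} {dv : ℕ} {r δ : ℝ}
    (hδ : 1 / 2 < δ) (hdv : 0 < dv) (hS : S.Nonempty)
    (hdeg : ∀ i, (univ.filter fun a => i ∈ N a).card ≤ dv)
    (h2 : ∀ a ∈ checkNeighbors N S, 2 ≤ (S.filter (· ∈ N a)).card)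
    (hexp : (S.card : ℝ) ≤ r → δ * dv * S.card ≤ (checkNeighbors N S).card) :
    r < S.card := by
  by_contra! hle
  have hcount : ((checkNeighbors N S).card : ℝ) * 2 ≤ S.card * dv := by
    exact_mod_cast card_checkNeighbors_mul_two_le hdeg h2
  have hpos : (0 : ℝ) < S.card * dv := by
    have := hS.card_pos
    positivity
  nlinarith [hexp hle, mul_pos (sub_pos.2 hδ) hpos]

end Code

theorem fractional_component_large_general
    (n m dv : ℕ)
    (Na : Fin m → Finset (Fin n))
    (hdv : ∀ i : Fin n, (Finset.univ.filter fun a => i ∈ Na a).card = dv)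
    (α δ : ℝ) (hδ : 1 / 2 < δ)
    (hexp : ∀ S : Finset (Fin n), (S.card : ℝ) ≤ α * n →
      δ * dv * S.card ≤ ((Finset.univ.filter fun a => ∃ i ∈ S, i ∈ Na a).card : ℝ))
    (P : Set (Fin n → ℝ))
    (hP : P = {f | (∀ i, 0 ≤ f i ∧ f i ≤ 1) ∧ ∀ a : Fin m,
        (fun i : ↥(Na a) => f i.1) ∈ convexHull ℝ
          {z : ↥(Na a) → ℝ | (∀ i, z i = 0 ∨ z i = 1) ∧ Even {i | z i = 1}.ncard}})
    (x : Fin n → ℝ) (hx : x ∈ Set.extremePoints ℝ P)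
    -- adjacency of fractional bits in the induced subgraph `G[V_frac(x)]`
    (adj : Fin n → Fin n → Prop)
    (hadj : adj = fun i j => (0 < x i ∧ x i < 1) ∧ (0 < x j ∧ x j < 1) ∧
      ∃ a : Fin m, i ∈ Na a ∧ j ∈ Na a) :
    ∀ i : Fin n, 0 < x i ∧ x i < 1 →
      α * n < ({j : Fin n | Relation.ReflTransGen adj i j}.ncard : ℝ) := by
  classical
  subst hP hadj
  intro i hi
  change α * n < ({j | Relation.ReflTransGen (fractionalAdj Na x) i j}.ncard : ℝ)
  set S := univ.filter (Relation.ReflTransGen (fractionalAdj Na x) i)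
  have hS : {j | Relation.ReflTransGen (fractionalAdj Na x) i j} = ↑S := by simp [S]
  rw [hS, Set.ncard_coe_finset]
  obtain ⟨a, hia⟩ := exists_mem_of_mem_extremePoints_fundamentalPolytope hx hi
  have hdv_pos : 0 < dv := hdv i ▸ card_pos.2 ⟨a, by simpa using hia⟩
  have hfrac : ∀ j ∈ S, 0 < x j ∧ x j < 1 :=
    fun j hj => fractional_of_reflTransGen_fractionalAdj hi (mem_filter.1 hj).2
  have hclosed : ∀ j ∈ S, ∀ k, fractionalAdj Na x j k → k ∈ S :=
    fun j hj k hjk => mem_filter.2 ⟨mem_univ k, (mem_filter.1 hj).2.tail hjk⟩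
  have hexpS : (S.card : ℝ) ≤ α * n → δ * dv * S.card ≤ (checkNeighbors Na S).card := by
    intro h
    -- the two filters differ only in their `Decidable` instances
    convert hexp S h using 4
    unfold checkNeighbors
    congr
  exact lt_card_of_forall_mem_checkNeighbors_two_le hδ hdv_pos
    ⟨i, mem_filter.2 ⟨mem_univ i, .refl⟩⟩ (fun j => (hdv j).le)
    (fun b => two_le_card_filter_of_mem_checkNeighbors hx.1 hfrac hclosed) hexpS

/-- **Connected components of the fractional subgraph are large.** For an
`(α, δ)`-expander `(d_v, d_c)`-regular code with `δ > 1/2` and any fractional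
pseudocodeword `x` of the fundamental polytope, every connected component of the
subgraph induced by the fractional bits (two fractional bits being adjacent when some
check is adjacent to both) contains more than `αn` fractional bits. -/
theorem fractional_component_large
    (n m dv dc : ℕ) (hn : 0 < n)
    (Na : Fin m → Finset (Fin n))
    (hdc : ∀ a, (Na a).card = dc)
    (hdv : ∀ i : Fin n, (Finset.univ.filter fun a => i ∈ Na a).card = dv)
    (α δ : ℝ) (hα0 : 0 < α) (hα1 : α < 1) (hδ : 1 / 2 < δ) (hδ1 : δ ≤ 1)
    (hexp : ∀ S : Finset (Fin n), (S.card : ℝ) ≤ α * n →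
      δ * dv * S.card ≤ ((Finset.univ.filter fun a => ∃ i ∈ S, i ∈ Na a).card : ℝ))
    (P : Set (Fin n → ℝ))
    (hP : P = {f | (∀ i, 0 ≤ f i ∧ f i ≤ 1) ∧ ∀ a : Fin m,
        (fun i : ↥(Na a) => f i.1) ∈ convexHull ℝ
          {z : ↥(Na a) → ℝ | (∀ i, z i = 0 ∨ z i = 1) ∧ Even {i | z i = 1}.ncard}})
    (x : Fin n → ℝ) (hx : x ∈ Set.extremePoints ℝ P)
    (hfrac : ∃ i, 0 < x i ∧ x i < 1)
    -- adjacency of fractional bits in the induced subgraph `G[V_frac(x)]`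
    (adj : Fin n → Fin n → Prop)
    (hadj : adj = fun i j => (0 < x i ∧ x i < 1) ∧ (0 < x j ∧ x j < 1) ∧
      ∃ a : Fin m, i ∈ Na a ∧ j ∈ Na a) :
    ∀ i : Fin n, 0 < x i ∧ x i < 1 →
      α * n < ({j : Fin n | Relation.ReflTransGen adj i j}.ncard : ℝ) :=
  fractional_component_large_general n m dv Na hdv α δ hδ hexp P hP x hx adj hadj
end
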